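/- arXiv:1803.02602 — 3 statements merged into one kernel-verified Lean document; each statement's English description precedes it below -/
import Mathlib

section
/- Let Q ∈ K^{s×n} satisfy Q^H Q = R_U and let B_r* be a best rank-r approximation (in Frobenius norm) of Q U_m, where U_m is the snapshot matrix. Then the POD space POD_r(U_m, ‖·‖_U) := argmin over r-dimensional subspaces W_r of range(U_m) of Σ_{i=1}^m ‖u(μ^i) − P_{W_r} u(μ^i)‖_U^2 equals {R_U^{-1} Q^H b : b ∈ range(B_r*)}. -/
open Matrix BigOperators

noncomputable section

/-- Inner product induced by `R`: `⟨x,y⟩_U = ⟨R x, y⟩`. -/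
def ipR {n : ℕ} (R : Matrix (Fin n) (Fin n) ℝ) (x y : Fin n → ℝ) : ℝ :=
  R.mulVec x ⬝ᵥ y

/-- Norm induced by `R`. -/
def normR {n : ℕ} (R : Matrix (Fin n) (Fin n) ℝ) (x : Fin n → ℝ) : ℝ :=
  Real.sqrt (ipR R x x)

/-- Euclidean norm. -/
def norm2 {m : ℕ} (v : Fin m → ℝ) : ℝ :=
  Real.sqrt (v ⬝ᵥ v)

/-- Dual norm `‖y‖_{U'}` induced by `⟨·, R⁻¹ ·⟩`. -/
def normDual {n : ℕ} (R : Matrix (Fin n) (Fin n) ℝ) (y : Fin n → ℝ) : ℝ :=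
  Real.sqrt (y ⬝ᵥ R⁻¹.mulVec y)

/-- Dual seminorm `‖y‖_{Z'} = sup_{w ∈ Z, w ≠ 0} |⟨y,w⟩|/‖w‖_U`. -/
def dualSemi {n : ℕ} (R : Matrix (Fin n) (Fin n) ℝ) (Z : Submodule ℝ (Fin n → ℝ))
    (y : Fin n → ℝ) : ℝ :=
  ⨆ w : Z, |y ⬝ᵥ (w : Fin n → ℝ)| / normR R (w : Fin n → ℝ)

/-- Sketched dual seminorm `‖y‖_{Z'}^Θ = sup_{w ∈ Z, w ≠ 0} |⟨Θ R⁻¹ y, Θ w⟩|/‖Θ w‖`. -/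
def skDualSemi {n k : ℕ} (R : Matrix (Fin n) (Fin n) ℝ) (Θ : Matrix (Fin k) (Fin n) ℝ)
    (Z : Submodule ℝ (Fin n → ℝ)) (y : Fin n → ℝ) : ℝ :=
  ⨆ w : Z, |(Θ.mulVec (R⁻¹.mulVec y)) ⬝ᵥ (Θ.mulVec (w : Fin n → ℝ))| /
      norm2 (Θ.mulVec (w : Fin n → ℝ))

/-- `i`-th column of a matrix as a vector. -/
def colV {n m : ℕ} (M : Matrix (Fin n) (Fin m) ℝ) (i : Fin m) : Fin n → ℝ :=
  fun j => M j i

/-- Squared Frobenius norm. -/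
def frob2 {a b : ℕ} (M : Matrix (Fin a) (Fin b) ℝ) : ℝ :=
  ∑ i, ∑ j, (M i j) ^ 2

/-!
Since `Qᵀ * Q = R`, the map `x ↦ Q *ᵥ x` is an isometry from `‖·‖_U` to the Euclidean norm, so
approximating the snapshots `colV Um i` by the columns of any `n × m` matrix `M` costs exactly
`frob2 (Q * (Um - M))`. A best rank-`r` approximation `B*` of `Q * Um` has its columns in the
range of `Q * Um` (projecting them there only lowers the error) and rank exactly `r` (otherwise
replacing one wrong column would lower it), so `B* = Q * Um * X` and `R⁻¹ * Qᵀ * B* = Um * X`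
spans an `r`-dimensional subspace of the snapshot space whose image under `Q` is `B*`.
For a competitor `W` with projections `q`, the matrix `Q * [q]` has rank at most `r`, so its
error is at least `frob2 (Q * Um - B*)`, the error of the columns of `Um * X`, which in turn
is at least that of the `R`-orthogonal projections `p`.
-/

section Columns

variable {a b c : ℕ}

lemma colV_mul (M : Matrix (Fin a) (Fin b) ℝ) (N : Matrix (Fin b) (Fin c) ℝ) (j : Fin c) :
    colV (M * N) j = M *ᵥ colV N j := by
  ext i
  simp [colV, mul_apply, mulVec, dotProduct]

lemma colV_add (M N : Matrix (Fin a) (Fin b) ℝ) (j : Fin b) :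
    colV (M + N) j = colV M j + colV N j := rfl

lemma colV_sub (M N : Matrix (Fin a) (Fin b) ℝ) (j : Fin b) :
    colV (M - N) j = colV M j - colV N j := rfl

@[simp]
lemma colV_transpose_of (v : Fin b → Fin a → ℝ) (j : Fin b) : colV (of v)ᵀ j = v j := rfl

lemma colV_mem_range_mulVecLin (M : Matrix (Fin a) (Fin b) ℝ) (j : Fin b) :
    colV M j ∈ LinearMap.range M.mulVecLin := by
  rw [range_mulVecLin]
  exact Submodule.subset_span ⟨j, rfl⟩

lemma range_mulVecLin_le_of_colV_mem {M : Matrix (Fin a) (Fin b) ℝ}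
    {S : Submodule ℝ (Fin a → ℝ)} (h : ∀ j, colV M j ∈ S) : LinearMap.range M.mulVecLin ≤ S := by
  rw [range_mulVecLin, Submodule.span_le]
  rintro - ⟨j, rfl⟩
  exact h j

lemma rank_le_finrank_of_colV_mem {M : Matrix (Fin a) (Fin b) ℝ}
    {S : Submodule ℝ (Fin a → ℝ)} (h : ∀ j, colV M j ∈ S) : M.rank ≤ Module.finrank ℝ S :=
  Submodule.finrank_mono (range_mulVecLin_le_of_colV_mem h)

lemma exists_mul_eq_of_range_le {A : Matrix (Fin a) (Fin b) ℝ} {B : Matrix (Fin a) (Fin c) ℝ}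
    (h : LinearMap.range B.mulVecLin ≤ LinearMap.range A.mulVecLin) :
    ∃ X : Matrix (Fin b) (Fin c) ℝ, A * X = B := by
  choose x hx using fun j => h (colV_mem_range_mulVecLin B j)
  refine ⟨(of x)ᵀ, ext fun i j => ?_⟩
  have hcol : colV (A * (of x)ᵀ) j = colV B j := by
    rw [colV_mul, colV_transpose_of]
    exact hx j
  exact congrFun hcol i

lemma rank_updateCol_le (B : Matrix (Fin a) (Fin b) ℝ) (j : Fin b) (v : Fin a → ℝ) :
    (B.updateCol j v).rank ≤ B.rank + 1 :=
  calc (B.updateCol j v).rank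
      ≤ Module.finrank ℝ ↥(LinearMap.range B.mulVecLin ⊔ ℝ ∙ v) := by
        refine rank_le_finrank_of_colV_mem fun k => ?_
        rcases eq_or_ne k j with rfl | hk
        · have : colV (B.updateCol k v) k = v := by ext i; simp [colV]
          rw [this]
          exact Submodule.mem_sup_right (Submodule.mem_span_singleton_self v)
        · have : colV (B.updateCol j v) k = colV B k := by ext i; simp [colV, hk]
          rw [this]
          exact Submodule.mem_sup_left (colV_mem_range_mulVecLin B k)
    _ ≤ B.rank + Module.finrank ℝ ↥(ℝ ∙ v) := Submodule.finrank_add_le_finrank_add_finrank _ _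
    _ ≤ B.rank + 1 := by
        grw [finrank_span_le_card ({v} : Set (Fin a → ℝ))]
        simp

end Columns

lemma dotProduct_self_nonneg {a : ℕ} (v : Fin a → ℝ) : 0 ≤ v ⬝ᵥ v := by
  simpa using dotProduct_star_self_nonneg v

section Frobenius

variable {a b : ℕ}

lemma frob2_eq_sum_colV (M : Matrix (Fin a) (Fin b) ℝ) :
    frob2 M = ∑ j, colV M j ⬝ᵥ colV M j := by
  rw [frob2, Finset.sum_comm]
  simp [colV, dotProduct, sq]

lemma frob2_nonneg (M : Matrix (Fin a) (Fin b) ℝ) : 0 ≤ frob2 M := by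
  unfold frob2
  positivity

lemma frob2_eq_zero_iff {M : Matrix (Fin a) (Fin b) ℝ} : frob2 M = 0 ↔ M = 0 := by
  simp [frob2, Finset.sum_eq_zero_iff_of_nonneg, Finset.sum_nonneg, sq_nonneg, ← Matrix.ext_iff]

lemma frob2_add_of_colV_dotProduct_eq_zero {X Y : Matrix (Fin a) (Fin b) ℝ}
    (h : ∀ j, colV X j ⬝ᵥ colV Y j = 0) : frob2 (X + Y) = frob2 X + frob2 Y := by
  simp only [frob2_eq_sum_colV, colV_add, ← Finset.sum_add_distrib]
  refine Finset.sum_congr rfl fun j _ => ?_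
  rw [add_dotProduct, dotProduct_add, dotProduct_add, h j, dotProduct_comm (colV Y j), h j]
  ring

end Frobenius

lemma exists_orthogonalProjection_matrix {a : ℕ} (S : Submodule ℝ (Fin a → ℝ)) :
    ∃ P : Matrix (Fin a) (Fin a) ℝ,
      (∀ v, P *ᵥ v ∈ S) ∧ ∀ v, ∀ w ∈ S, (v - P *ᵥ v) ⬝ᵥ w = 0 := by
  let e := WithLp.linearEquiv 2 ℝ (Fin a → ℝ)
  let K := S.comap e.toLinearMap
  refine ⟨LinearMap.toMatrix' (e.toLinearMap ∘ₗ K.starProjection.toLinearMap ∘ₗ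
    e.symm.toLinearMap), fun v => ?_, fun v w hw => ?_⟩
  · simpa [e] using Submodule.mem_comap.1 (K.starProjection_apply_mem (WithLp.toLp 2 v))
  · have := K.starProjection_inner_eq_zero (WithLp.toLp 2 v) (WithLp.toLp 2 w) hw
    simpa [e, EuclideanSpace.inner_eq_star_dotProduct, dotProduct_comm] using this

def IsBestRankApprox {s m : ℕ} (r : ℕ) (A B : Matrix (Fin s) (Fin m) ℝ) : Prop :=
  B.rank ≤ r ∧ ∀ C : Matrix (Fin s) (Fin m) ℝ, C.rank ≤ r → frob2 (A - B) ≤ frob2 (A - C)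

namespace IsBestRankApprox

variable {s m r : ℕ} {A B : Matrix (Fin s) (Fin m) ℝ}

theorem range_le (hB : IsBestRankApprox r A B) :
    LinearMap.range B.mulVecLin ≤ LinearMap.range A.mulVecLin := by
  obtain ⟨P, hPmem, hPorth⟩ := exists_orthogonalProjection_matrix (LinearMap.range A.mulVecLin)
  have hsplit : frob2 (A - B) = frob2 (A - P * B) + frob2 (P * B - B) := by
    rw [← frob2_add_of_colV_dotProduct_eq_zero, sub_add_sub_cancel]
    intro j
    rw [colV_sub, colV_sub, colV_mul, ← neg_sub (colV B j), dotProduct_neg, dotProduct_comm,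
      hPorth _ _ (sub_mem (colV_mem_range_mulVecLin A j) (hPmem _)), neg_zero]
  have hbest := hB.2 (P * B) ((rank_mul_le_right P B).trans hB.1)
  have hPB : P * B = B :=
    sub_eq_zero.1 (frob2_eq_zero_iff.1 (le_antisymm (by linarith) (frob2_nonneg _)))
  rw [← hPB]
  exact range_mulVecLin_le_of_colV_mem fun j => colV_mul P B j ▸ hPmem _

theorem rank_eq (hB : IsBestRankApprox r A B) (hr : r ≤ A.rank) : B.rank = r := by
  refine le_antisymm hB.1 (not_lt.1 fun hlt => ?_)
  obtain ⟨j, hj⟩ : ∃ j, colV (A - B) j ≠ 0 := by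
    by_contra! h
    have hAB : A = B := sub_eq_zero.1 (ext fun i j => congrFun (h j) i)
    exact (hAB ▸ hr).not_gt hlt
  let C := B.updateCol j (colV A j)
  have hcol : ∀ k, colV (A - C) k = if k = j then 0 else colV (A - B) k := by
    intro k
    ext i
    split_ifs with hk <;> simp [C, colV, hk]
  refine (hB.2 C ((rank_updateCol_le B j _).trans (by omega))).not_gt ?_
  rw [frob2_eq_sum_colV, frob2_eq_sum_colV]
  refine Finset.sum_lt_sum (fun k _ => ?_) ⟨j, Finset.mem_univ j, ?_⟩
  · rw [hcol]
    split_ifs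
    · simpa using dotProduct_self_nonneg _
    · rfl
  · rw [hcol, if_pos rfl, zero_dotProduct]
    exact (dotProduct_self_nonneg _).lt_of_ne (Ne.symm (dotProduct_self_eq_zero.not.2 hj))

end IsBestRankApprox

section Factorization

variable {n s : ℕ} {R : Matrix (Fin n) (Fin n) ℝ} {Q : Matrix (Fin s) (Fin n) ℝ}

lemma ipR_eq_dotProduct_mulVec (hQ : Qᵀ * Q = R) (x y : Fin n → ℝ) :
    ipR R x y = Q *ᵥ x ⬝ᵥ Q *ᵥ y := by
  rw [ipR, ← hQ, ← mulVec_mulVec, mulVec_transpose, ← dotProduct_mulVec]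

lemma normR_sq_eq_dotProduct_mulVec (hQ : Qᵀ * Q = R) (x : Fin n → ℝ) :
    normR R x ^ 2 = Q *ᵥ x ⬝ᵥ Q *ᵥ x := by
  rw [normR, ipR_eq_dotProduct_mulVec hQ, Real.sq_sqrt (dotProduct_self_nonneg _)]

lemma frob2_mul_eq_sum_normR_sq (hQ : Qᵀ * Q = R) {m : ℕ} (M : Matrix (Fin n) (Fin m) ℝ) :
    frob2 (Q * M) = ∑ j, normR R (colV M j) ^ 2 := by
  simp only [frob2_eq_sum_colV, colV_mul, normR_sq_eq_dotProduct_mulVec hQ]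

lemma normR_sub_sq_le_of_orthogonal (hQ : Qᵀ * Q = R) {S : Submodule ℝ (Fin n → ℝ)}
    {u p z : Fin n → ℝ} (hp : p ∈ S) (hz : z ∈ S) (horth : ∀ w ∈ S, ipR R (u - p) w = 0) :
    normR R (u - p) ^ 2 ≤ normR R (u - z) ^ 2 := by
  have hpz := horth _ (S.sub_mem hp hz)
  rw [ipR_eq_dotProduct_mulVec hQ] at hpz
  rw [normR_sq_eq_dotProduct_mulVec hQ, normR_sq_eq_dotProduct_mulVec hQ,
    ← sub_add_sub_cancel u p z, mulVec_add, add_dotProduct, dotProduct_add, dotProduct_add, hpz,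
    dotProduct_comm (Q *ᵥ (p - z)), hpz]
  linarith [dotProduct_self_nonneg (Q *ᵥ (p - z))]

end Factorization

/-- The exact POD subspace equals `{R⁻¹ Qᴴ b : b ∈ range B_r*}`, where `B_r*` is a best
rank-r Frobenius approximation of `Q U_m`: this subspace is an r-dimensional subspace of
the snapshot space minimizing the POD error. -/
theorem exact_pod_characterization {n m s r : ℕ} (R : Matrix (Fin n) (Fin n) ℝ)
    (hR : R.PosDef) (Q : Matrix (Fin s) (Fin n) ℝ) (hQ : Qᵀ * Q = R)
    (Um : Matrix (Fin n) (Fin m) ℝ) (hr : r ≤ (Q * Um).rank)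
    (Bstar : Matrix (Fin s) (Fin m) ℝ)
    (hBstarRank : Bstar.rank ≤ r)
    (hBstarBest : ∀ C : Matrix (Fin s) (Fin m) ℝ, C.rank ≤ r →
      frob2 (Q * Um - Bstar) ≤ frob2 (Q * Um - C))
    (p : Fin m → (Fin n → ℝ))
    (hpmem : ∀ i, p i ∈ LinearMap.range (R⁻¹ * Qᵀ * Bstar).mulVecLin)
    (hporth : ∀ i, ∀ w ∈ LinearMap.range (R⁻¹ * Qᵀ * Bstar).mulVecLin,
      ipR R (colV Um i - p i) w = 0) :
    LinearMap.range (R⁻¹ * Qᵀ * Bstar).mulVecLin ≤ LinearMap.range Um.mulVecLin ∧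
    Module.finrank ℝ (LinearMap.range (R⁻¹ * Qᵀ * Bstar).mulVecLin) = r ∧
    ∀ W : Submodule ℝ (Fin n → ℝ), W ≤ LinearMap.range Um.mulVecLin →
      Module.finrank ℝ W = r →
      ∀ q : Fin m → (Fin n → ℝ),
        (∀ i, q i ∈ W ∧ ∀ w ∈ W, ipR R (colV Um i - q i) w = 0) →
        ∑ i, (normR R (colV Um i - p i)) ^ 2 ≤ ∑ i, (normR R (colV Um i - q i)) ^ 2 := by
  have hB : IsBestRankApprox r (Q * Um) Bstar := ⟨hBstarRank, hBstarBest⟩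
  obtain ⟨X, hX⟩ := exists_mul_eq_of_range_le hB.range_le
  have hRinv : R⁻¹ * R = 1 := nonsing_inv_mul R ((isUnit_iff_isUnit_det R).1 hR.isUnit)
  have hZ : R⁻¹ * Qᵀ * Bstar = Um * X := by
    rw [← hX, Matrix.mul_assoc, ← Matrix.mul_assoc Qᵀ, ← Matrix.mul_assoc Qᵀ, hQ,
      ← Matrix.mul_assoc, ← Matrix.mul_assoc, hRinv, Matrix.one_mul]
  have hQZ : Q * (Um * X) = Bstar := by rw [← Matrix.mul_assoc, hX]
  have hrank : (Um * X).rank = r := by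
    refine le_antisymm (hZ ▸ (rank_mul_le_right _ _).trans hB.1) ?_
    calc r = (Q * (Um * X)).rank := by rw [hQZ, hB.rank_eq hr]
      _ ≤ (Um * X).rank := rank_mul_le_right _ _
  rw [hZ] at hpmem hporth ⊢
  refine ⟨?_, hrank, fun W _ hWr q hq => ?_⟩
  · rw [mulVecLin_mul]
    exact LinearMap.range_comp_le_range _ _
  have hqrank : (Q * (of q)ᵀ).rank ≤ r :=
    (rank_mul_le_right _ _).trans (hWr ▸ rank_le_finrank_of_colV_mem fun i => (hq i).1)
  calc ∑ i, normR R (colV Um i - p i) ^ 2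
      ≤ ∑ i, normR R (colV Um i - colV (Um * X) i) ^ 2 :=
        Finset.sum_le_sum fun i _ => normR_sub_sq_le_of_orthogonal hQ (hpmem i)
          (colV_mem_range_mulVecLin _ i) (hporth i)
    _ = frob2 (Q * Um - Bstar) := by rw [← hQZ, ← Matrix.mul_sub, frob2_mul_eq_sum_normR_sq hQ]; rfl
    _ ≤ frob2 (Q * Um - Q * (of q)ᵀ) := hBstarBest _ hqrank
    _ = ∑ i, normR R (colV Um i - q i) ^ 2 := by
        rw [← Matrix.mul_sub, frob2_mul_eq_sum_normR_sq hQ]; rfl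
end
end

section
/- Let u_r ∈ U_r satisfy the sketched Galerkin condition ‖r(u_r)‖_{U_r'}^Θ = 0, where r(x) = b − A x, and define α_r^Θ = min_{x ∈ U_r\{0}} ‖A x‖_{U_r'}^Θ / ‖x‖_U and β_r^Θ = max_{x ∈ (span{u}+U_r)\{0}} ‖A x‖_{U_r'}^Θ / ‖x‖_U with u the exact solution of A u = b. If α_r^Θ > 0, then ‖u − u_r‖_U ≤ (1 + β_r^Θ/α_r^Θ) ‖u − P_{U_r} u‖_U. -/
open Matrix BigOperators

noncomputable section

/-! For `p ∈ U_r`, the discrete error `p - u_r` lies in `U_r` and `A (p - u_r) = A (p - u) + r(u_r)`.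
The sketched Galerkin condition removes the residual term from the sketched dual seminorm, which
is subadditive, so the two constants give `α ‖p - u_r‖_U ≤ β ‖u - p‖_U`; the triangle inequality
through `p` finishes. -/

theorem normR_add_le {n : ℕ} {R : Matrix (Fin n) (Fin n) ℝ} (hR : R.PosSemidef)
    (x y : Fin n → ℝ) : normR R (x + y) ≤ normR R x + normR R y :=
  @norm_add_le _ (R.toSeminormedAddCommGroup hR).toSeminormedAddGroup x y

theorem normR_sub_comm {n : ℕ} (R : Matrix (Fin n) (Fin n) ℝ) (x y : Fin n → ℝ) :
    normR R (x - y) = normR R (y - x) := by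
  rw [← neg_sub, normR, normR, ipR, ipR, mulVec_neg, neg_dotProduct, dotProduct_neg, neg_neg]

theorem norm2_eq_norm_toLp {m : ℕ} (v : Fin m → ℝ) : norm2 v = ‖WithLp.toLp 2 v‖ := by
  simp [norm2, EuclideanSpace.norm_eq, dotProduct, sq]

theorem abs_dotProduct_div_norm2_le {m : ℕ} (a v : Fin m → ℝ) :
    |a ⬝ᵥ v| / norm2 v ≤ norm2 a := by
  have hcs : |a ⬝ᵥ v| ≤ norm2 a * norm2 v := by
    rw [dotProduct_comm]
    simpa [norm2_eq_norm_toLp, EuclideanSpace.inner_eq_star_dotProduct] using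
      abs_real_inner_le_norm (WithLp.toLp 2 a) (WithLp.toLp 2 v)
  exact div_le_of_le_mul₀ (Real.sqrt_nonneg _) (Real.sqrt_nonneg _) hcs

section skDualSemi

variable {n k : ℕ} (R : Matrix (Fin n) (Fin n) ℝ) (Θ : Matrix (Fin k) (Fin n) ℝ)
  (Z : Submodule ℝ (Fin n → ℝ))

theorem bddAbove_skDualSemi_range (y : Fin n → ℝ) :
    BddAbove (Set.range fun w : Z =>
      |Θ *ᵥ (R⁻¹ *ᵥ y) ⬝ᵥ Θ *ᵥ (w : Fin n → ℝ)| / norm2 (Θ *ᵥ (w : Fin n → ℝ))) :=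
  ⟨norm2 (Θ *ᵥ (R⁻¹ *ᵥ y)), by
    rintro _ ⟨w, rfl⟩
    exact abs_dotProduct_div_norm2_le _ _⟩

theorem skDualSemi_add_le (y₁ y₂ : Fin n → ℝ) :
    skDualSemi R Θ Z (y₁ + y₂) ≤ skDualSemi R Θ Z y₁ + skDualSemi R Θ Z y₂ := by
  refine ciSup_le fun w => ?_
  have h₁ := le_ciSup (bddAbove_skDualSemi_range R Θ Z y₁) w
  have h₂ := le_ciSup (bddAbove_skDualSemi_range R Θ Z y₂) w
  refine le_trans ?_ (add_le_add h₁ h₂)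
  rw [mulVec_add, mulVec_add, add_dotProduct, ← add_div]
  exact div_le_div_of_nonneg_right (abs_add_le _ _) (Real.sqrt_nonneg _)

end skDualSemi

theorem sketched_cea_lemma_general {n k : ℕ} (R A : Matrix (Fin n) (Fin n) ℝ) (hR : R.PosDef)
    (Θ : Matrix (Fin k) (Fin n) ℝ)
    (b u ur p : Fin n → ℝ) (Ur : Submodule ℝ (Fin n → ℝ)) (α β : ℝ)
    (hu : A.mulVec u = b) (hur : ur ∈ Ur)
    (hGal : skDualSemi R Θ Ur (b - A.mulVec ur) = 0)
    (hα : 0 < α)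
    (hαb : ∀ x ∈ Ur, α * normR R x ≤ skDualSemi R Θ Ur (A.mulVec x))
    (hβ : ∀ x ∈ Submodule.span ℝ {u} ⊔ Ur,
      skDualSemi R Θ Ur (A.mulVec x) ≤ β * normR R x)
    (hp : p ∈ Ur) :
    normR R (u - ur) ≤ (1 + β / α) * normR R (u - p) := by
  have hmem : p - u ∈ Submodule.span ℝ {u} ⊔ Ur :=
    sub_mem (Submodule.mem_sup_right hp)
      (Submodule.mem_sup_left (Submodule.mem_span_singleton_self u))
  have hsplit : A *ᵥ (p - ur) = A *ᵥ (p - u) + (b - A *ᵥ ur) := by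
    rw [← hu, mulVec_sub, mulVec_sub]
    abel
  have hstab : α * normR R (p - ur) ≤ β * normR R (u - p) :=
    calc α * normR R (p - ur) ≤ skDualSemi R Θ Ur (A *ᵥ (p - ur)) := hαb _ (sub_mem hp hur)
      _ ≤ skDualSemi R Θ Ur (A *ᵥ (p - u)) + skDualSemi R Θ Ur (b - A *ᵥ ur) :=
          hsplit ▸ skDualSemi_add_le R Θ Ur _ _
      _ ≤ β * normR R (u - p) := by
          rw [hGal, add_zero, normR_sub_comm]
          exact hβ _ hmem
  calc normR R (u - ur) = normR R ((u - p) + (p - ur)) := by rw [sub_add_sub_cancel]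
    _ ≤ normR R (u - p) + normR R (p - ur) := normR_add_le hR.posSemidef _ _
    _ ≤ (1 + β / α) * normR R (u - p) := by
        rw [add_mul, one_mul, div_mul_eq_mul_div]
        gcongr
        rwa [le_div_iff₀' hα]

/-- Cea's lemma for the sketched Galerkin projection. -/
theorem sketched_cea_lemma {n k : ℕ} (R A : Matrix (Fin n) (Fin n) ℝ) (hR : R.PosDef)
    (Θ : Matrix (Fin k) (Fin n) ℝ)
    (b u ur p : Fin n → ℝ) (Ur : Submodule ℝ (Fin n → ℝ)) (α β : ℝ)
    (hu : A.mulVec u = b) (hur : ur ∈ Ur)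
    (hGal : skDualSemi R Θ Ur (b - A.mulVec ur) = 0)
    (hα : 0 < α)
    (hαb : ∀ x ∈ Ur, α * normR R x ≤ skDualSemi R Θ Ur (A.mulVec x))
    (hβ : ∀ x ∈ Submodule.span ℝ {u} ⊔ Ur,
      skDualSemi R Θ Ur (A.mulVec x) ≤ β * normR R x)
    (hp : p ∈ Ur) (hporth : ∀ w ∈ Ur, ipR R (u - p) w = 0) :
    normR R (u - ur) ≤ (1 + β / α) * normR R (u - p) :=
  sketched_cea_lemma_general R A hR Θ b u ur p Ur α β hu hur hGal hα hαb hβ hp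
end
end

section
/- Let a_r = max over nonzero w ∈ U_r of ‖A w‖_{U'}/‖A w‖_{U_r'}, and suppose Θ is a U → ℓ2 ε-subspace embedding for Y_r = U_r + span{R_U^{-1}(b − A x) : x ∈ U_r}. Then α_r^Θ ≥ (1/√(1+ε))(1 − ε a_r) α_r and β_r^Θ ≤ (1/√(1−ε))(β_r + ε β), where α_r, β_r are the Galerkin quasi-optimality constants, β = max_{x ∈ U\{0}} ‖A x‖_{U'}/‖x‖_U, and α_r^Θ, β_r^Θ are the corresponding sketched constants defined with the seminorm ‖y‖_{U_r'}^Θ = max_{x ∈ U_r\{0}} |⟨Θ R_U^{-1} y, Θ x⟩|/‖Θx‖. -/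
/-!
The sketched seminorm `‖y‖_{U_r'}^Θ` changes two things in `‖y‖_{U_r'}`: the numerator
`y ⬝ᵥ w = ⟨R⁻¹ y, w⟩_U` becomes `⟨Θ R⁻¹ y, Θ w⟩`, an error of at most `ε ‖y‖_{U'} ‖w‖_U`
once `R⁻¹ y` and `w` lie in `Y_r`, and the denominator `‖w‖_U` becomes `‖Θ w‖`, which lies
between `√(1 - ε) ‖w‖_U` and `√(1 + ε) ‖w‖_U`. Since `A u = b`, `R⁻¹ A x ∈ Y_r` for every
`x ∈ span {u} + U_r`, so
`‖A x‖_{U_r'} ≤ √(1 + ε) ‖A x‖_{U_r'}^Θ + ε ‖A x‖_{U'}` and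
`‖A x‖_{U_r'}^Θ ≤ (‖A x‖_{U_r'} + ε ‖A x‖_{U'}) / √(1 - ε)`.
The `β_r` bound is the second inequality; the `α_r` bound follows from the first after absorbing
`ε ‖A x‖_{U'} ≤ ε a_r ‖A x‖_{U_r'}` into the left-hand side.
-/

open Matrix BigOperators

noncomputable section

def IsSubspaceEmbedding {n k : ℕ} (R : Matrix (Fin n) (Fin n) ℝ) (Θ : Matrix (Fin k) (Fin n) ℝ)
    (ε : ℝ) (Y : Submodule ℝ (Fin n → ℝ)) : Prop :=
  ∀ x ∈ Y, ∀ y ∈ Y, |ipR R x y - Θ *ᵥ x ⬝ᵥ Θ *ᵥ y| ≤ ε * normR R x * normR R y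

section Norms

variable {n : ℕ} {R : Matrix (Fin n) (Fin n) ℝ}

theorem ipR_self_nonneg (hR : R.PosSemidef) (x : Fin n → ℝ) : 0 ≤ ipR R x x := by
  simpa [ipR, dotProduct_comm] using hR.dotProduct_mulVec_nonneg x

theorem normR_nonneg (x : Fin n → ℝ) : 0 ≤ normR R x := Real.sqrt_nonneg _

theorem mul_self_normR (hR : R.PosSemidef) (x : Fin n → ℝ) :
    normR R x * normR R x = ipR R x x :=
  Real.mul_self_sqrt (ipR_self_nonneg hR x)

-- `ipR R x y` is definitionally the inner product `⟪y, x⟫` of `Matrix.toInnerProductSpace`.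
theorem abs_ipR_le_normR_mul_normR (hR : R.PosSemidef) (x y : Fin n → ℝ) :
    |ipR R x y| ≤ normR R x * normR R y := by
  let _ := R.toSeminormedAddCommGroup hR
  let _ := R.toInnerProductSpace hR
  rw [mul_comm]
  exact abs_real_inner_le_norm y x

theorem abs_dotProduct_le_norm2_mul_norm2 {m : ℕ} (v w : Fin m → ℝ) :
    |v ⬝ᵥ w| ≤ norm2 v * norm2 w := by
  simpa [ipR, normR, norm2] using abs_ipR_le_normR_mul_normR PosSemidef.one v w

theorem ipR_inv_mulVec (hR : R.PosDef) (y w : Fin n → ℝ) : ipR R (R⁻¹ *ᵥ y) w = y ⬝ᵥ w := by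
  rw [ipR, mulVec_mulVec, mul_nonsing_inv R hR.det_pos.ne'.isUnit, one_mulVec]

theorem normDual_eq_normR_inv_mulVec (hR : R.PosDef) (y : Fin n → ℝ) :
    normDual R y = normR R (R⁻¹ *ᵥ y) := by
  rw [normDual, normR, ipR_inv_mulVec hR]

theorem normDual_nonneg (y : Fin n → ℝ) : 0 ≤ normDual R y := Real.sqrt_nonneg _

end Norms

theorem abs_le_ciSup_div_mul {ι : Type*} {f g : ι → ℝ} {C : ℝ} (hC : 0 ≤ C)
    (hg : ∀ i, 0 ≤ g i) (hfg : ∀ i, |f i| ≤ C * g i) (i : ι) :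
    |f i| ≤ (⨆ j, |f j| / g j) * g i := by
  rcases (hg i).eq_or_lt with hgi | hgi
  · simpa [← hgi] using hfg i
  have hbdd : BddAbove (Set.range fun j => |f j| / g j) :=
    ⟨C, by rintro _ ⟨j, rfl⟩; exact div_le_of_le_mul₀ (hg j) hC (hfg j)⟩
  exact (div_le_iff₀ hgi).1 (le_ciSup hbdd i)

section DualSeminorms

variable {n k : ℕ} {R : Matrix (Fin n) (Fin n) ℝ} {Θ : Matrix (Fin k) (Fin n) ℝ}
  {Z : Submodule ℝ (Fin n → ℝ)} {y : Fin n → ℝ}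

theorem dualSemi_nonneg : 0 ≤ dualSemi R Z y :=
  Real.iSup_nonneg fun _ => div_nonneg (abs_nonneg _) (normR_nonneg _)

theorem skDualSemi_nonneg : 0 ≤ skDualSemi R Θ Z y :=
  Real.iSup_nonneg fun _ => div_nonneg (abs_nonneg _) (Real.sqrt_nonneg _)

theorem abs_dotProduct_le_dualSemi_mul_normR (hR : R.PosDef) {w : Fin n → ℝ} (hw : w ∈ Z) :
    |y ⬝ᵥ w| ≤ dualSemi R Z y * normR R w :=
  abs_le_ciSup_div_mul (f := fun v : Z => y ⬝ᵥ (v : Fin n → ℝ)) (normR_nonneg _)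
    (fun _ => normR_nonneg _)
    (fun v => ipR_inv_mulVec hR y v ▸ abs_ipR_le_normR_mul_normR hR.posSemidef _ _) ⟨w, hw⟩

theorem abs_dotProduct_le_skDualSemi_mul_norm2 {w : Fin n → ℝ} (hw : w ∈ Z) :
    |Θ *ᵥ (R⁻¹ *ᵥ y) ⬝ᵥ Θ *ᵥ w| ≤ skDualSemi R Θ Z y * norm2 (Θ *ᵥ w) :=
  abs_le_ciSup_div_mul (f := fun v : Z => Θ *ᵥ (R⁻¹ *ᵥ y) ⬝ᵥ Θ *ᵥ (v : Fin n → ℝ))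
    (Real.sqrt_nonneg _) (fun _ => Real.sqrt_nonneg _)
    (fun _ => abs_dotProduct_le_norm2_mul_norm2 _ _) ⟨w, hw⟩

theorem dualSemi_le_of_forall_abs_le {M : ℝ} (hM : 0 ≤ M)
    (h : ∀ w ∈ Z, |y ⬝ᵥ w| ≤ M * normR R w) : dualSemi R Z y ≤ M :=
  ciSup_le fun w => div_le_of_le_mul₀ (normR_nonneg _) hM (h w w.2)

theorem skDualSemi_le_of_forall_abs_le {M : ℝ} (hM : 0 ≤ M)
    (h : ∀ w ∈ Z, |Θ *ᵥ (R⁻¹ *ᵥ y) ⬝ᵥ Θ *ᵥ w| ≤ M * norm2 (Θ *ᵥ w)) :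
    skDualSemi R Θ Z y ≤ M :=
  ciSup_le fun w => div_le_of_le_mul₀ (Real.sqrt_nonneg _) hM (h w w.2)

end DualSeminorms

section Embedding

variable {n k : ℕ} {R : Matrix (Fin n) (Fin n) ℝ} {Θ : Matrix (Fin k) (Fin n) ℝ} {ε : ℝ}
  {Y : Submodule ℝ (Fin n → ℝ)}

theorem IsSubspaceEmbedding.norm2_mulVec_le (hΘ : IsSubspaceEmbedding R Θ ε Y)
    (hR : R.PosSemidef) {z : Fin n → ℝ} (hz : z ∈ Y) :
    norm2 (Θ *ᵥ z) ≤ Real.sqrt (1 + ε) * normR R z := by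
  have h := (abs_le.1 (hΘ z hz z hz)).1
  rw [mul_assoc, mul_self_normR hR] at h
  rw [normR, ← Real.sqrt_mul' _ (ipR_self_nonneg hR z)]
  exact Real.sqrt_le_sqrt (by linarith)

theorem IsSubspaceEmbedding.sqrt_mul_normR_le (hΘ : IsSubspaceEmbedding R Θ ε Y)
    (hR : R.PosSemidef) {z : Fin n → ℝ} (hz : z ∈ Y) :
    Real.sqrt (1 - ε) * normR R z ≤ norm2 (Θ *ᵥ z) := by
  have h := (abs_le.1 (hΘ z hz z hz)).2
  rw [mul_assoc, mul_self_normR hR] at h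
  rw [normR, ← Real.sqrt_mul' _ (ipR_self_nonneg hR z)]
  exact Real.sqrt_le_sqrt (by linarith)

theorem IsSubspaceEmbedding.abs_dotProduct_sub_le (hΘ : IsSubspaceEmbedding R Θ ε Y)
    (hR : R.PosDef) {y w : Fin n → ℝ} (hy : R⁻¹ *ᵥ y ∈ Y) (hw : w ∈ Y) :
    |y ⬝ᵥ w - Θ *ᵥ (R⁻¹ *ᵥ y) ⬝ᵥ Θ *ᵥ w| ≤ ε * normDual R y * normR R w := by
  simpa [ipR_inv_mulVec hR, ← normDual_eq_normR_inv_mulVec hR] using hΘ _ hy w hw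

theorem IsSubspaceEmbedding.dualSemi_le (hΘ : IsSubspaceEmbedding R Θ ε Y) (hR : R.PosDef)
    (hε : 0 ≤ ε) {Z : Submodule ℝ (Fin n → ℝ)} (hZ : Z ≤ Y) {y : Fin n → ℝ}
    (hy : R⁻¹ *ᵥ y ∈ Y) :
    dualSemi R Z y ≤ Real.sqrt (1 + ε) * skDualSemi R Θ Z y + ε * normDual R y := by
  have hsk : 0 ≤ skDualSemi R Θ Z y := skDualSemi_nonneg
  have hM : 0 ≤ Real.sqrt (1 + ε) * skDualSemi R Θ Z y + ε * normDual R y := by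
    have := normDual_nonneg (R := R) y
    positivity
  refine dualSemi_le_of_forall_abs_le hM fun w hw => ?_
  have hsketch : |Θ *ᵥ (R⁻¹ *ᵥ y) ⬝ᵥ Θ *ᵥ w| ≤
      skDualSemi R Θ Z y * (Real.sqrt (1 + ε) * normR R w) :=
    (abs_dotProduct_le_skDualSemi_mul_norm2 hw).trans <|
      mul_le_mul_of_nonneg_left (hΘ.norm2_mulVec_le hR.posSemidef (hZ hw)) hsk
  have hdiff := hΘ.abs_dotProduct_sub_le hR hy (hZ hw)
  calc |y ⬝ᵥ w| ≤ |Θ *ᵥ (R⁻¹ *ᵥ y) ⬝ᵥ Θ *ᵥ w| + ε * normDual R y * normR R w := by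
        linarith [abs_sub_abs_le_abs_sub (y ⬝ᵥ w) (Θ *ᵥ (R⁻¹ *ᵥ y) ⬝ᵥ Θ *ᵥ w)]
    _ ≤ _ := by linarith

theorem IsSubspaceEmbedding.skDualSemi_le (hΘ : IsSubspaceEmbedding R Θ ε Y) (hR : R.PosDef)
    (hε0 : 0 ≤ ε) (hε1 : ε < 1) {Z : Submodule ℝ (Fin n → ℝ)} (hZ : Z ≤ Y) {y : Fin n → ℝ}
    (hy : R⁻¹ *ᵥ y ∈ Y) :
    skDualSemi R Θ Z y ≤ (dualSemi R Z y + ε * normDual R y) / Real.sqrt (1 - ε) := by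
  have hs : 0 < Real.sqrt (1 - ε) := Real.sqrt_pos.2 (by linarith)
  have hM : 0 ≤ (dualSemi R Z y + ε * normDual R y) / Real.sqrt (1 - ε) := by
    have := dualSemi_nonneg (R := R) (Z := Z) (y := y)
    have := normDual_nonneg (R := R) y
    positivity
  refine skDualSemi_le_of_forall_abs_le hM fun w hw => ?_
  have hexact := abs_dotProduct_le_dualSemi_mul_normR hR hw (y := y)
  have hdiff := hΘ.abs_dotProduct_sub_le hR hy (hZ hw)
  calc |Θ *ᵥ (R⁻¹ *ᵥ y) ⬝ᵥ Θ *ᵥ w| ≤ |y ⬝ᵥ w| + ε * normDual R y * normR R w := by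
        linarith [abs_sub_abs_le_abs_sub (Θ *ᵥ (R⁻¹ *ᵥ y) ⬝ᵥ Θ *ᵥ w) (y ⬝ᵥ w),
          abs_sub_comm (y ⬝ᵥ w) (Θ *ᵥ (R⁻¹ *ᵥ y) ⬝ᵥ Θ *ᵥ w)]
    _ ≤ (dualSemi R Z y + ε * normDual R y) * normR R w := by linarith
    _ = (dualSemi R Z y + ε * normDual R y) / Real.sqrt (1 - ε) *
          (Real.sqrt (1 - ε) * normR R w) := by field_simp
    _ ≤ _ := mul_le_mul_of_nonneg_left (hΘ.sqrt_mul_normR_le hR.posSemidef (hZ hw)) hM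

theorem IsSubspaceEmbedding.le_skDualSemi (hΘ : IsSubspaceEmbedding R Θ ε Y) (hR : R.PosDef)
    (hε : 0 ≤ ε) {Z : Submodule ℝ (Fin n → ℝ)} (hZ : Z ≤ Y) {y : Fin n → ℝ}
    (hy : R⁻¹ *ᵥ y ∈ Y) {a α t : ℝ} (ha : normDual R y ≤ a * dualSemi R Z y) (hα : 0 ≤ α)
    (hαt : α * t ≤ dualSemi R Z y) (ht : 0 ≤ t) :
    1 / Real.sqrt (1 + ε) * ((1 - ε * a) * α) * t ≤ skDualSemi R Θ Z y := by
  have hs : 0 < Real.sqrt (1 + ε) := Real.sqrt_pos.2 (by linarith)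
  have hcomp := hΘ.dualSemi_le hR hε hZ hy
  have hinf : (1 - ε * a) * dualSemi R Z y ≤ Real.sqrt (1 + ε) * skDualSemi R Θ Z y := by
    linarith [mul_le_mul_of_nonneg_left ha hε]
  rw [one_div_mul_eq_div, div_mul_eq_mul_div, div_le_iff₀ hs, mul_assoc, mul_comm _ (Real.sqrt _)]
  rcases le_total 0 (1 - ε * a) with hpos | hneg
  · exact (mul_le_mul_of_nonneg_left hαt hpos).trans hinf
  · have : (1 - ε * a) * (α * t) ≤ 0 := mul_nonpos_of_nonpos_of_nonneg hneg (by positivity)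
    exact this.trans (mul_nonneg hs.le skDualSemi_nonneg)

end Embedding

theorem inv_mulVec_mulVec_mem_of_mem_sup {n : ℕ} {R A : Matrix (Fin n) (Fin n) ℝ}
    {b u : Fin n → ℝ} (hu : A *ᵥ u = b) {Ur : Submodule ℝ (Fin n → ℝ)} {x : Fin n → ℝ}
    (hx : x ∈ Submodule.span ℝ {u} ⊔ Ur) :
    R⁻¹ *ᵥ (A *ᵥ x) ∈
      Ur ⊔ Submodule.span ℝ ((fun x => R⁻¹ *ᵥ (b - A *ᵥ x)) '' (Ur : Set (Fin n → ℝ))) := by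
  set Y := Ur ⊔ Submodule.span ℝ ((fun x => R⁻¹ *ᵥ (b - A *ᵥ x)) '' (Ur : Set (Fin n → ℝ)))
  have hresidual {v : Fin n → ℝ} (hv : v ∈ Ur) : R⁻¹ *ᵥ (b - A *ᵥ v) ∈ Y :=
    Submodule.mem_sup_right (Submodule.subset_span ⟨v, hv, rfl⟩)
  have hb : R⁻¹ *ᵥ b ∈ Y := by simpa using hresidual Ur.zero_mem
  suffices Submodule.span ℝ {u} ⊔ Ur ≤ Y.comap (toLin' (R⁻¹ * A)) by
    simpa [← mulVec_mulVec] using this hx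
  refine sup_le ((Submodule.span_singleton_le_iff_mem _ _).2 ?_) fun v hv => ?_
  · simpa [← mulVec_mulVec, hu] using hb
  · have : R⁻¹ *ᵥ (A *ᵥ v) = R⁻¹ *ᵥ b - R⁻¹ *ᵥ (b - A *ᵥ v) := by
      rw [mulVec_sub, sub_sub_cancel]
    simpa [← mulVec_mulVec, this] using Y.sub_mem hb (hresidual hv)

theorem sketched_constants_bounds_general {n k : ℕ} (R A : Matrix (Fin n) (Fin n) ℝ)
    (hR : R.PosDef) (Θ : Matrix (Fin k) (Fin n) ℝ)
    (b u : Fin n → ℝ) (hu : A.mulVec u = b)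
    (Ur : Submodule ℝ (Fin n → ℝ))
    (ε a αr βr β : ℝ) (hε0 : 0 ≤ ε) (hε1 : ε < 1) (hαr0 : 0 ≤ αr)
    (hemb : ∀ x ∈ Ur ⊔ Submodule.span ℝ
        ((fun x => R⁻¹.mulVec (b - A.mulVec x)) '' (Ur : Set (Fin n → ℝ))),
      ∀ y ∈ Ur ⊔ Submodule.span ℝ
        ((fun x => R⁻¹.mulVec (b - A.mulVec x)) '' (Ur : Set (Fin n → ℝ))),
      |ipR R x y - (Θ.mulVec x) ⬝ᵥ (Θ.mulVec y)| ≤ ε * normR R x * normR R y)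
    (ha : ∀ w ∈ Ur, normDual R (A.mulVec w) ≤ a * dualSemi R Ur (A.mulVec w))
    (hαr : ∀ x ∈ Ur, αr * normR R x ≤ dualSemi R Ur (A.mulVec x))
    (hβr : ∀ x ∈ Submodule.span ℝ {u} ⊔ Ur,
      dualSemi R Ur (A.mulVec x) ≤ βr * normR R x)
    (hβ : ∀ x : Fin n → ℝ, normDual R (A.mulVec x) ≤ β * normR R x) :
    (∀ x ∈ Ur,
      (1 / Real.sqrt (1 + ε)) * ((1 - ε * a) * αr) * normR R x ≤
        skDualSemi R Θ Ur (A.mulVec x)) ∧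
    (∀ x ∈ Submodule.span ℝ {u} ⊔ Ur,
      skDualSemi R Θ Ur (A.mulVec x) ≤
        (1 / Real.sqrt (1 - ε)) * (βr + ε * β) * normR R x) := by
  set Y := Ur ⊔ Submodule.span ℝ ((fun x => R⁻¹ *ᵥ (b - A *ᵥ x)) '' (Ur : Set (Fin n → ℝ)))
  have hΘ : IsSubspaceEmbedding R Θ ε Y := hemb
  have hUr : Ur ≤ Y := le_sup_left
  refine ⟨fun x hx => ?_, fun x hx => ?_⟩
  · exact hΘ.le_skDualSemi hR hε0 hUr
      (inv_mulVec_mulVec_mem_of_mem_sup hu (Submodule.mem_sup_right hx))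
      (ha x hx) hαr0 (hαr x hx) (normR_nonneg x)
  · calc skDualSemi R Θ Ur (A *ᵥ x)
        ≤ (dualSemi R Ur (A *ᵥ x) + ε * normDual R (A *ᵥ x)) / Real.sqrt (1 - ε) :=
          hΘ.skDualSemi_le hR hε0 hε1 hUr (inv_mulVec_mulVec_mem_of_mem_sup hu hx)
      _ ≤ (βr * normR R x + ε * (β * normR R x)) / Real.sqrt (1 - ε) := by
          gcongr
          exacts [hβr x hx, hβ x]
      _ = _ := by ring

/-- Bounds on the sketched quasi-optimality constants `α_r^Θ` and `β_r^Θ` in terms of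
the exact constants, provided `Θ` is an ε-embedding for
`Y_r = U_r + span{R⁻¹(b - A x) : x ∈ U_r}`. -/
theorem sketched_constants_bounds {n k : ℕ} (R A : Matrix (Fin n) (Fin n) ℝ)
    (hR : R.PosDef) (Θ : Matrix (Fin k) (Fin n) ℝ)
    (b u : Fin n → ℝ) (hu : A.mulVec u = b)
    (Ur : Submodule ℝ (Fin n → ℝ))
    (ε a αr βr β : ℝ) (hε0 : 0 ≤ ε) (hε1 : ε < 1) (ha0 : 0 ≤ a) (hαr0 : 0 ≤ αr)
    (hemb : ∀ x ∈ Ur ⊔ Submodule.span ℝ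
        ((fun x => R⁻¹.mulVec (b - A.mulVec x)) '' (Ur : Set (Fin n → ℝ))),
      ∀ y ∈ Ur ⊔ Submodule.span ℝ
        ((fun x => R⁻¹.mulVec (b - A.mulVec x)) '' (Ur : Set (Fin n → ℝ))),
      |ipR R x y - (Θ.mulVec x) ⬝ᵥ (Θ.mulVec y)| ≤ ε * normR R x * normR R y)
    (ha : ∀ w ∈ Ur, normDual R (A.mulVec w) ≤ a * dualSemi R Ur (A.mulVec w))
    (hαr : ∀ x ∈ Ur, αr * normR R x ≤ dualSemi R Ur (A.mulVec x))
    (hβr : ∀ x ∈ Submodule.span ℝ {u} ⊔ Ur,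
      dualSemi R Ur (A.mulVec x) ≤ βr * normR R x)
    (hβ : ∀ x : Fin n → ℝ, normDual R (A.mulVec x) ≤ β * normR R x) :
    (∀ x ∈ Ur,
      (1 / Real.sqrt (1 + ε)) * ((1 - ε * a) * αr) * normR R x ≤
        skDualSemi R Θ Ur (A.mulVec x)) ∧
    (∀ x ∈ Submodule.span ℝ {u} ⊔ Ur,
      skDualSemi R Θ Ur (A.mulVec x) ≤
        (1 / Real.sqrt (1 - ε)) * (βr + ε * β) * normR R x) :=
  sketched_constants_bounds_general R A hR Θ b u hu Ur ε a αr βr β hε0 hε1 hαr0 hemb ha hαr hβr hβ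
end
end
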